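/- For every vertex μ of Γ, the nonempty posterior branches emanating from μ are in one-to-one correspondence with the free vertices proximate to μ (each nonempty posterior branch of μ contains exactly one free vertex that is proximate to μ), and the anterior branches emanating from μ are in one-to-one correspondence with the vertices to which μ is proximate (each anterior branch of μ contains exactly one vertex to which μ is proximate). -/

import Mathlib

open Matrix BigOperators

open scoped Classical

noncomputable section

/-- Proximity data of a dual graph on vertex set `Fin N`, built from a single
root vertex by a finite sequence of elementary modifications. Vertices are
ordered by creation; each new vertex is proximate to at most two existing
(earlier) vertices, which must be adjacent to each other at that time if
there are two of them. -/
structure DualGraph where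
  N : ℕ
  Npos : 0 < N
  prox : Fin N → Fin N → Prop
  prox_lt : ∀ {μ ν}, prox μ ν → ν < μ
  prox_card : ∀ μ, {ν | prox μ ν}.ncard ≤ 2
  prox_nonempty : ∀ μ : Fin N, 0 < (μ : ℕ) → ∃ ν, prox μ ν
  prox_pair : ∀ {μ a b}, prox μ a → prox μ b → a ≠ b →
      (prox a b ∨ prox b a) ∧ ∀ ρ, ρ < μ → ¬(prox ρ a ∧ prox ρ b)

namespace DualGraph

variable (G : DualGraph)

/-- The proximity matrix `P`. -/
def P : Matrix (Fin G.N) (Fin G.N) ℚ :=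
  fun μ ν => if μ = ν then 1 else if G.prox μ ν then -1 else 0

/-- `Q = P⁻¹`. -/
def Q : Matrix (Fin G.N) (Fin G.N) ℚ := (G.P)⁻¹

/-- The valuation matrix `V = (PᵀP)⁻¹`. -/
def V : Matrix (Fin G.N) (Fin G.N) ℚ := (G.Pᵀ * G.P)⁻¹

/-- Adjacency in the dual graph: `μ ∼ ν` iff `(PᵀP)_{μν} = -1`. -/
def adj (μ ν : Fin G.N) : Prop := μ ≠ ν ∧ (G.Pᵀ * G.P) μ ν = -1

lemma adj_symm {μ ν : Fin G.N} (h : G.adj μ ν) : G.adj ν μ := by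
  obtain ⟨hne, h2⟩ := h
  refine ⟨hne.symm, ?_⟩
  have ht : (G.Pᵀ * G.P)ᵀ = G.Pᵀ * G.P := by
    rw [Matrix.transpose_mul, Matrix.transpose_transpose]
  calc (G.Pᵀ * G.P) ν μ = (G.Pᵀ * G.P)ᵀ μ ν := rfl
    _ = (G.Pᵀ * G.P) μ ν := by rw [ht]
    _ = -1 := h2

/-- The dual graph as a simple graph. -/
def graph : SimpleGraph (Fin G.N) where
  Adj := G.adj
  symm := ⟨fun _ _ h => G.adj_symm h⟩
  loopless := ⟨fun μ h => h.1 rfl⟩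

/-- The graph distance `d(μ,ν)`. -/
def dist (μ ν : Fin G.N) : ℕ := G.graph.dist μ ν

/-- The set of vertices on the unique path `[μ,γ]` from `μ` to `γ`. -/
def pathSet (μ γ : Fin G.N) : Finset (Fin G.N) :=
  Finset.univ.filter (fun ν => G.dist μ ν + G.dist ν γ = G.dist μ γ)

/-- The branch `Γ^μ_ν` emanating from `μ` towards `ν`: the maximal connected
subgraph of `Γ` containing `ν` but not `μ` (with `Γ^μ_μ = ∅`). -/
def branch (μ ν : Fin G.N) : Finset (Fin G.N) :=
  Finset.univ.filter (fun η => ν ≠ μ ∧ η ≠ μ ∧ μ ∉ G.pathSet ν η)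

/-- The set of vertices adjacent to `μ`. -/
def nbrs (μ : Fin G.N) : Finset (Fin G.N) := Finset.univ.filter (fun ν => G.adj μ ν)

/-- The valence `v_Γ(μ)`: the number of vertices adjacent to `μ`. -/
def valence (μ : Fin G.N) : ℕ := (G.nbrs μ).card

/-- The weight `w_Γ(μ) = (PᵀP)_{μμ}`. -/
def w (μ : Fin G.N) : ℚ := (G.Pᵀ * G.P) μ μ

/-- The canonical vector `k`, `k_ν = Σ_μ q_{νμ}`. -/
def kvec : Fin G.N → ℚ := fun ν => ∑ μ, G.Q ν μ

/-- A divisor with valuation vector `f` is antinef iff its factorization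
vector `f̂ = f PᵀP` is nonnegative. -/
def Antinef (f : Fin G.N → ℚ) : Prop := ∀ ν, 0 ≤ (f ᵥ* (G.Pᵀ * G.P)) ν

/-- `λ(fE, gE; ν) = (f_ν + k_ν + 1)/g_ν` for divisors with valuation
vectors `f`, `g`. -/
def lamDiv (f g : Fin G.N → ℚ) (ν : Fin G.N) : ℚ := (f ν + G.kvec ν + 1) / g ν

/-- `ρ_{[μ,γ]}(ν) = V_{γν}/V_{μν}`. -/
def rho (μ γ ν : Fin G.N) : ℚ := G.V γ ν / G.V μ ν

/-- `r̂_{[μ,γ]} = 𝟙_γ − ρ_{[μ,γ]}(μ)·𝟙_μ`. -/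
def rhat (μ γ : Fin G.N) : Fin G.N → ℚ :=
  fun j => (if j = γ then 1 else 0) - G.rho μ γ μ * (if j = μ then 1 else 0)

/-- `φ_η^{[μ,γ]}(ν) = (r̂_{[μ,γ]}V)_ν / V_{ην}`. -/
def phi (η μ γ ν : Fin G.N) : ℚ := (G.rhat μ γ ᵥ* G.V) ν / G.V η ν

/-- The transform `f̂_{⟨ĝ⟩[ĥ]}` relative to the vertex `μ`. -/
def transform (μ : Fin G.N) (fh gh hh : Fin G.N → ℚ) : Fin G.N → ℚ :=
  fh - (∑ i ∈ G.nbrs μ, ∑ j ∈ G.branch μ i, gh j • G.rhat i j)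
     + ∑ i ∈ G.nbrs μ, hh i • G.rhat μ i

/-- The transform `f̂^𝒩 = f̂ − Σ_i f̂_i·r̂_{[μ,i]}` relative to the vertex `μ`. -/
def nmap (μ : Fin G.N) (fh : Fin G.N → ℚ) : Fin G.N → ℚ :=
  fh - ∑ i, fh i • G.rhat μ i

/-- A vertex is free if it is proximate to at most one vertex. -/
def Free (μ : Fin G.N) : Prop := {ν | G.prox μ ν}.ncard ≤ 1

/-- `μ` is infinitely near to `ν` (written `ν ⊂ μ`): the reflexive-transitive
closure of proximity. -/
def InfNear (μ ν : Fin G.N) : Prop := Relation.ReflTransGen G.prox μ ν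

/-- The root vertex. -/
def root : Fin G.N := ⟨0, G.Npos⟩

/-- The branch `Γ^μ_ν` is anterior to `μ` if `μ` is infinitely near to some of
its vertices; otherwise it is posterior. -/
def Anterior (μ ν : Fin G.N) : Prop := ∃ η ∈ G.branch μ ν, G.InfNear μ η

/-- The pair `(γ,τ)` associated to `μ`. -/
def PairAssociated (γ τ μ : Fin G.N) : Prop :=
  G.InfNear τ γ ∧ G.InfNear μ τ ∧ G.Free τ ∧
  (∀ ν, G.Free ν → G.InfNear μ ν → G.InfNear τ ν) ∧
  ((¬ G.Free γ ∧ ∀ ν, ¬ G.Free ν → G.InfNear τ ν → G.InfNear γ ν) ∨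
   ((∀ ν, G.InfNear τ ν → G.Free ν) ∧ γ = G.root))

/-- The entries of `V` as natural numbers (they are positive integers). -/
def Vnat (μ ν : Fin G.N) : ℕ := (G.V μ ν).num.toNat

/-- The submonoid `SV^μ_ν` of `ℕ` generated by `{V_{μi} : i ∈ Γ^μ_ν ∪ {μ}}`. -/
def SVb (μ ν : Fin G.N) : AddSubmonoid ℕ :=
  AddSubmonoid.closure ↑((insert μ (G.branch μ ν)).image (G.Vnat μ))

/-- `s^μ_ν = gcd{V_{μi} : i ∈ Γ^μ_ν ∪ {μ}}`. -/
def sgcd (μ ν : Fin G.N) : ℕ := (insert μ (G.branch μ ν)).gcd (G.Vnat μ)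

/-- The submonoid `S^μ` of `ℕ` generated by the `s^μ_ν`, `ν ∈ Γ`. -/
def Ssg (μ : Fin G.N) : AddSubmonoid ℕ :=
  AddSubmonoid.closure (Set.range (fun ν => G.sgcd μ ν))

/-- The valuation vector `d = d̂V` of the ideal with factorization vector `d̂`. -/
def dval (dh : Fin G.N → ℕ) : Fin G.N → ℚ := (fun i => (dh i : ℚ)) ᵥ* G.V

/-- `λ(a,ν) = (a + k_ν + 1)/d_ν`. -/
def lamA (dh : Fin G.N → ℕ) (a : ℚ) (ν : Fin G.N) : ℚ :=
  (a + G.kvec ν + 1) / G.dval dh ν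

/-- The set of jumping numbers of the ideal with factorization vector `d̂`
supported at the vertex `μ`. -/
def Hset (dh : Fin G.N → ℕ) (μ : Fin G.N) : Set ℚ :=
  { ξ | ∃ f : Fin G.N → ℤ, G.Antinef (fun i => (f i : ℚ)) ∧
      (∀ ν, G.lamA dh (f μ : ℚ) μ ≤ G.lamA dh (f ν : ℚ) ν) ∧
      ξ = G.lamA dh (f μ : ℚ) μ }

end DualGraph
end

/-!
Build `Γ` one vertex at a time. Creating `t` attaches a leaf to the vertex `t` is proximate to,
or subdivides the edge between the two vertices `t` is proximate to. So deleting an older vertex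
`s` splits the older vertices into the same pieces at every later stage, and every stage is a
tree: the largest vertex of a cycle would be a satellite whose two proximate vertices are joined
avoiding it. Reading the pieces off when a vertex is created: a satellite separates the two
vertices it is proximate to; a free `ν ≻ μ` is a leaf at `μ`, so its branch at `μ` contains only
vertices created after `ν`; and every vertex older than `μ` lies in a branch of `μ` through a
vertex to which `μ` is proximate. This gives uniqueness in both cases and existence for anterior
branches. In a posterior branch the oldest vertex proximate to `μ` is free: otherwise the second
vertex it is proximate to is older, lies in the same branch, and is proximate to `μ` because `μ`
is not proximate to it.
-/
namespace SimpleGraph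

variable {V W : Type*} {H H' : SimpleGraph V} {s x y : V}

lemma Reachable.of_forall_adj_reachable {K : SimpleGraph W} (f : V → W)
    (hf : ∀ a b, H.Adj a b → K.Reachable (f a) (f b)) (h : H.Reachable x y) :
    K.Reachable (f x) (f y) := by
  rw [reachable_iff_reflTransGen] at h ⊢
  exact h.lift' f fun a b hab => (reachable_iff_reflTransGen _ _).mp (hf a b hab)

lemma Reachable.eq_of_forall_not_adj (hx : ∀ y, ¬ H.Adj x y) (h : H.Reachable x y) :
    x = y := by
  obtain ⟨_ | ⟨hadj, _⟩⟩ := h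
  · rfl
  · exact absurd hadj (hx _)

lemma Reachable.exists_reachable_adj_mem {S : Set V}
    (hH : ∀ a b, H.Adj a b → a ∉ S → b ∉ S → H'.Adj a b)
    (h : H.Reachable x y) (hx : x ∉ S) (hy : y ∈ S) :
    ∃ w z, H'.Reachable x w ∧ w ∉ S ∧ z ∈ S ∧ H.Adj w z := by
  obtain ⟨p⟩ := h
  induction p with
  | nil => exact absurd hy hx
  | @cons u v _ huv _ ih =>
    by_cases hv : v ∈ S
    · exact ⟨u, v, .refl u, hx, hv, huv⟩
    · obtain ⟨w, z, hw, hrest⟩ := ih hv hy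
      exact ⟨w, z, (hH u v huv hx hv).reachable.trans hw, hrest⟩

lemma Walk.reachable_deleteIncidenceSet (p : H.Walk x y) (hs : s ∉ p.support) :
    (H.deleteIncidenceSet s).Reachable x y := by
  induction p with
  | nil => rfl
  | @cons u v _ huv p ih =>
    rw [support_cons, List.mem_cons, not_or] at hs
    have hv : v ≠ s := by
      rintro rfl
      exact hs.2 p.start_mem_support
    exact (deleteIncidenceSet_adj.mpr ⟨huv, Ne.symm hs.1, hv⟩).reachable.trans (ih hs.2)

lemma Reachable.exists_walk_of_deleteIncidenceSet
    (h : (H.deleteIncidenceSet s).Reachable x y) (hx : x ≠ s) :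
    ∃ p : H.Walk x y, s ∉ p.support := by
  obtain ⟨p⟩ := h
  refine ⟨p.mapLe (deleteIncidenceSet_le H s), ?_⟩
  rw [Walk.support_mapLe_eq_support]
  induction p with
  | nil => simpa using hx.symm
  | cons huv p ih =>
    rw [Walk.support_cons, List.mem_cons, not_or]
    exact ⟨hx.symm, ih (deleteIncidenceSet_adj.mp huv).2.2⟩

lemma IsTree.dist_add_dist_eq_iff (hH : H.IsTree) (hx : x ≠ s) :
    H.dist x s + H.dist s y = H.dist x y ↔ ¬ (H.deleteIncidenceSet s).Reachable x y := by
  constructor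
  · intro hdist hreach
    obtain ⟨q, hq⟩ := hreach.exists_walk_of_deleteIncidenceSet hx
    obtain ⟨A, hA⟩ := hH.connected.exists_walk_length_eq_dist x s
    obtain ⟨B, hB⟩ := hH.connected.exists_walk_length_eq_dist s y
    have hpath : (A.append B).IsPath :=
      (A.append B).isPath_of_length_eq_dist (by rw [Walk.length_append, hA, hB, hdist])
    have heq := (hH.isAcyclic.subsingleton_path x y).elim ⟨_, hpath⟩ ⟨_, q.bypass_isPath⟩
    have hs : s ∈ (A.append B).support :=
      (Walk.mem_support_append_iff A B).mpr (Or.inl A.end_mem_support)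
    rw [show A.append B = q.bypass from congrArg Subtype.val heq] at hs
    exact hq (q.support_bypass_subset_support hs)
  · intro hsep
    obtain ⟨W, hW⟩ := hH.connected.exists_walk_length_eq_dist x y
    have hs : s ∈ W.support := by
      by_contra h
      exact hsep (W.reachable_deleteIncidenceSet h)
    have hsplit := congrArg Walk.length (W.take_spec hs)
    rw [Walk.length_append] at hsplit
    have := dist_le (W.takeUntil s hs)
    have := dist_le (W.dropUntil s hs)
    have := hH.connected.dist_triangle (u := x) (v := s) (w := y)
    omega

/-- A cycle would have a largest vertex `m`, whose two neighbours on it are joined by the rest of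
the cycle, which avoids `m`. -/
lemma isAcyclic_of_forall_lt_adj [LinearOrder V]
    (h : ∀ m x y, H.Adj m x → H.Adj m y → x < m → y < m → x ≠ y →
      ¬ (H.deleteIncidenceSet m).Reachable x y) :
    H.IsAcyclic := by
  intro v c hc
  obtain ⟨m, hm, hmax⟩ := c.support.toFinset.exists_max_image id ⟨v, by simp⟩
  rw [List.mem_toFinset] at hm
  have hle : ∀ a ∈ (c.rotate m hm).support, a ≤ m := fun a ha =>
    hmax a (List.mem_toFinset.mpr ((c.mem_support_rotate_iff m hm).mp ha))
  have hc' := hc.rotate hm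
  generalize c.rotate m hm = c' at hc' hle
  cases c' with
  | nil => exact hc'.not_nil Walk.Nil.nil
  | @cons _ x _ hmx p =>
    rw [Walk.cons_isCycle_iff] at hc'
    have hq := hc'.1.reverse
    have hedge : s(m, x) ∉ p.reverse.edges := by
      rw [Walk.edges_reverse, List.mem_reverse]; exact hc'.2
    have hsupp : ∀ a ∈ p.reverse.support, a ≤ m := by
      intro a ha
      rw [Walk.support_reverse, List.mem_reverse] at ha
      exact hle a (List.mem_cons_of_mem _ ha)
    generalize p.reverse = q at hq hedge hsupp
    cases q with
    | nil => exact H.loopless.irrefl _ hmx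
    | @cons _ y _ hmy r =>
      rw [Walk.cons_isPath_iff] at hq
      have hxm : x ≠ m := fun h => hq.2 (h ▸ r.end_mem_support)
      have hym : y ≠ m := fun h => hq.2 (h ▸ r.start_mem_support)
      have hxy : x ≠ y := by
        rintro rfl
        exact hedge (by simp)
      refine h m x y hmx hmy (lt_of_le_of_ne (hsupp x ?_) hxm) (lt_of_le_of_ne (hsupp y ?_) hym)
        hxy (r.reachable_deleteIncidenceSet hq.2).symm
      · exact List.mem_cons_of_mem _ r.end_mem_support
      · exact List.mem_cons_of_mem _ r.start_mem_support

end SimpleGraph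

namespace DualGraph

open SimpleGraph

variable {G : DualGraph} {a b c d s t x y μ ν η γ : Fin G.N} {m n : ℕ}

lemma prox_irrefl (a : Fin G.N) : ¬ G.prox a a := fun h => lt_irrefl _ (G.prox_lt h)

lemma not_prox_of_prox (h : G.prox a b) : ¬ G.prox b a := fun h' =>
  lt_asymm (G.prox_lt h) (G.prox_lt h')

lemma transpose_P_mul_P_apply_of_ne (hab : a ≠ b) :
    (G.Pᵀ * G.P) a b = ((Finset.univ.filter fun ρ => G.prox ρ a ∧ G.prox ρ b).card : ℚ)
      - (if G.prox a b then 1 else 0) - (if G.prox b a then 1 else 0) := by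
  have hterm : ∀ ρ, G.P ρ a * G.P ρ b = (if G.prox ρ a ∧ G.prox ρ b then 1 else 0)
      - (if ρ = a then (if G.prox a b then 1 else 0) else 0)
      - (if ρ = b then (if G.prox b a then 1 else 0) else 0) := by
    intro ρ
    by_cases ha : ρ = a
    · subst ha; by_cases h : G.prox ρ b <;> simp [P, hab, prox_irrefl, h]
    by_cases hb : ρ = b
    · subst hb; by_cases h : G.prox ρ a <;> simp [P, hab.symm, prox_irrefl, h]
    by_cases hpa : G.prox ρ a <;> by_cases hpb : G.prox ρ b <;> simp [P, ha, hb, hpa, hpb]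
  simp only [mul_apply, transpose_apply, hterm, Finset.sum_sub_distrib, Finset.sum_boole,
    Finset.sum_ite_eq', Finset.mem_univ, if_true]

lemma adj_iff : G.adj a b ↔ (G.prox a b ∨ G.prox b a) ∧ ∀ ρ, ¬ (G.prox ρ a ∧ G.prox ρ b) := by
  have hempty : (Finset.univ.filter fun ρ => G.prox ρ a ∧ G.prox ρ b).card = 0 ↔
      ∀ ρ, ¬ (G.prox ρ a ∧ G.prox ρ b) := by
    simp [Finset.card_eq_zero, Finset.filter_eq_empty_iff]
  rw [← hempty]
  constructor
  · rintro ⟨hab, h⟩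
    rw [transpose_P_mul_P_apply_of_ne hab] at h
    generalize (Finset.univ.filter fun ρ => G.prox ρ a ∧ G.prox ρ b).card = c at h ⊢
    have hc : (0 : ℚ) ≤ c := Nat.cast_nonneg c
    by_cases hp : G.prox a b
    · rw [if_pos hp, if_neg (not_prox_of_prox hp)] at h
      exact ⟨Or.inl hp, by exact_mod_cast (by linarith : (c : ℚ) = 0)⟩
    by_cases hq : G.prox b a
    · rw [if_neg hp, if_pos hq] at h
      exact ⟨Or.inr hq, by exact_mod_cast (by linarith : (c : ℚ) = 0)⟩
    · rw [if_neg hp, if_neg hq] at h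
      linarith
  · rintro ⟨hp | hp, hc⟩
    · refine ⟨ne_of_gt (G.prox_lt hp), ?_⟩
      rw [transpose_P_mul_P_apply_of_ne (ne_of_gt (G.prox_lt hp)), hc, if_pos hp,
        if_neg (not_prox_of_prox hp)]
      norm_num
    · refine ⟨ne_of_lt (G.prox_lt hp), ?_⟩
      rw [transpose_P_mul_P_apply_of_ne (ne_of_lt (G.prox_lt hp)), hc, if_neg (not_prox_of_prox hp),
        if_pos hp]
      norm_num

/-- The dual graph after the vertices `0, …, n - 1` have been created; later vertices are
isolated. -/
def stage (G : DualGraph) (n : ℕ) : SimpleGraph (Fin G.N) where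
  Adj a b := a.1 < n ∧ b.1 < n ∧ (G.prox a b ∨ G.prox b a) ∧
    ∀ ρ : Fin G.N, ρ.1 < n → ¬ (G.prox ρ a ∧ G.prox ρ b)
  symm := ⟨fun _ _ h => ⟨h.2.1, h.1, h.2.2.1.symm, fun ρ hρ hp => h.2.2.2 ρ hρ hp.symm⟩⟩
  loopless := ⟨fun a h => prox_irrefl a (h.2.2.1.elim id id)⟩

lemma stage_adj : (G.stage n).Adj a b ↔ a.1 < n ∧ b.1 < n ∧ (G.prox a b ∨ G.prox b a) ∧
    ∀ ρ : Fin G.N, ρ.1 < n → ¬ (G.prox ρ a ∧ G.prox ρ b) := Iff.rfl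

lemma graph_eq_stage : G.graph = G.stage G.N := by
  ext a b
  rw [stage_adj]
  exact adj_iff.trans ⟨fun h => ⟨a.2, b.2, h.1, fun ρ _ => h.2 ρ⟩,
    fun h => ⟨h.2.2.1, fun ρ => h.2.2.2 ρ ρ.2⟩⟩

lemma stage_succ_adj_iff_of_ne (hx : x ≠ t) (hy : y ≠ t) :
    (G.stage (t.1 + 1)).Adj x y ↔ (G.stage t.1).Adj x y ∧ ¬ (G.prox t x ∧ G.prox t y) := by
  have hρ : ∀ ρ : Fin G.N, ρ.1 < t.1 + 1 ↔ ρ.1 < t.1 ∨ ρ = t := fun ρ => by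
    rw [Fin.ext_iff]; omega
  simp only [stage_adj, hρ, or_imp, forall_and, forall_eq, hx, hy, or_false]
  tauto

lemma stage_succ_adj_left_iff : (G.stage (t.1 + 1)).Adj t y ↔ G.prox t y := by
  rw [stage_adj]
  refine ⟨fun h => h.2.2.1.resolve_right fun hyt => ?_, fun h => ?_⟩
  · exact absurd (G.prox_lt hyt) (not_lt.mpr (Nat.lt_succ_iff.mp h.2.1))
  · exact ⟨Nat.lt_succ_self _, Nat.lt_succ_of_lt (G.prox_lt h), Or.inl h,
      fun ρ hρ hp => absurd (G.prox_lt hp.1) (not_lt.mpr (Nat.lt_succ_iff.mp hρ))⟩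

lemma stage_adj_of_prox_of_prox (ha : G.prox t a) (hb : G.prox t b) (hab : a ≠ b) :
    (G.stage t.1).Adj a b := by
  obtain ⟨hor, hno⟩ := G.prox_pair ha hb hab
  exact stage_adj.mpr ⟨G.prox_lt ha, G.prox_lt hb, hor, fun ρ hρ => hno ρ hρ⟩

lemma ne_of_stage_adj (h : (G.stage t.1).Adj x y) : x ≠ t :=
  fun hxt => lt_irrefl t.1 (hxt ▸ (stage_adj.mp h).1)

lemma exists_forall_prox_reachable_stage (s t : Fin G.N) :
    ∃ u, ∀ q, G.prox t q → q ≠ s → ((G.stage t.1).deleteIncidenceSet s).Reachable u q := by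
  by_cases h : ∃ u, G.prox t u ∧ u ≠ s
  · obtain ⟨u, htu, hus⟩ := h
    refine ⟨u, fun q htq hqs => ?_⟩
    by_cases huq : u = q
    · exact huq ▸ .refl u
    · exact (deleteIncidenceSet_adj.mpr
        ⟨stage_adj_of_prox_of_prox htu htq huq, hus, hqs⟩).reachable
  · push Not at h
    exact ⟨s, fun q htq hqs => absurd (h q htq) hqs⟩

lemma reachable_stage_succ_iff (hst : s ≠ t) (hx : x ≠ t) (hy : y ≠ t) :
    ((G.stage (t.1 + 1)).deleteIncidenceSet s).Reachable x y ↔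
      ((G.stage t.1).deleteIncidenceSet s).Reachable x y := by
  constructor
  · -- collapse `t` onto a vertex it is proximate to, other than `s`
    obtain ⟨u, hu⟩ := exists_forall_prox_reachable_stage s t
    intro h
    have := h.of_forall_adj_reachable (K := (G.stage t.1).deleteIncidenceSet s)
      (fun z => if z = t then u else z) fun p q hpq => ?_
    · simpa [hx, hy] using this
    obtain ⟨hpq, hps, hqs⟩ := deleteIncidenceSet_adj.mp hpq
    by_cases hpt : p = t
    · subst hpt
      simpa [hpq.ne.symm] using hu q (stage_succ_adj_left_iff.mp hpq) hqs
    by_cases hqt : q = t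
    · subst hqt
      simpa [hpt] using (hu p (stage_succ_adj_left_iff.mp hpq.symm) hps).symm
    · simp only [hpt, hqt, if_false]
      exact (deleteIncidenceSet_adj.mpr
        ⟨((stage_succ_adj_iff_of_ne hpt hqt).mp hpq).1, hps, hqs⟩).reachable
  · -- an edge `p — q` broken by `t` is replaced by the detour `p — t — q`
    refine fun h => h.of_forall_adj_reachable id fun p q hpq => ?_
    obtain ⟨hpq, hps, hqs⟩ := deleteIncidenceSet_adj.mp hpq
    by_cases hdet : G.prox t p ∧ G.prox t q
    · have hpt : ((G.stage (t.1 + 1)).deleteIncidenceSet s).Adj p t :=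
        deleteIncidenceSet_adj.mpr ⟨(stage_succ_adj_left_iff.mpr hdet.1).symm, hps, hst.symm⟩
      have htq : ((G.stage (t.1 + 1)).deleteIncidenceSet s).Adj t q :=
        deleteIncidenceSet_adj.mpr ⟨stage_succ_adj_left_iff.mpr hdet.2, hst.symm, hqs⟩
      exact hpt.reachable.trans htq.reachable
    · exact (deleteIncidenceSet_adj.mpr ⟨(stage_succ_adj_iff_of_ne (ne_of_stage_adj hpq)
        (ne_of_stage_adj hpq.symm)).mpr ⟨hpq, hdet⟩, hps, hqs⟩).reachable

lemma reachable_stage_iff (hmn : m ≤ n) (hn : n ≤ G.N) (hs : s.1 < m) (hx : x.1 < m)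
    (hy : y.1 < m) :
    ((G.stage n).deleteIncidenceSet s).Reachable x y ↔
      ((G.stage m).deleteIncidenceSet s).Reachable x y := by
  induction n, hmn using Nat.le_induction with
  | base => rfl
  | succ n hmn ih =>
    have hne : ∀ z : Fin G.N, z.1 < m → z ≠ ⟨n, hn⟩ := fun z hz =>
      Fin.ne_of_val_ne (show z.1 ≠ n by omega)
    exact (reachable_stage_succ_iff (hne s hs) (hne x hx) (hne y hy)).trans (ih (by omega))

/-- A vertex proximate to both `c` and `d` is created after `c`, so the detour around a broken
edge `c — d` stays among vertices `≥ c`. -/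
lemma exists_walk_of_prox (hcd : G.prox c d) (hc : c.1 < n) :
    ∃ p : (G.stage n).Walk c d, ∀ z ∈ p.support, c ≤ z ∨ z = d := by
  induction c using WellFoundedGT.induction generalizing d with
  | _ c ih =>
  by_cases hadj : (G.stage n).Adj c d
  · exact ⟨.cons hadj .nil, by simp⟩
  obtain ⟨ρ, hρn, hρc, hρd⟩ : ∃ ρ : Fin G.N, ρ.1 < n ∧ G.prox ρ c ∧ G.prox ρ d := by
    by_contra! h
    exact hadj (stage_adj.mpr ⟨hc, Nat.lt_trans (G.prox_lt hcd) hc, Or.inl hcd,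
      fun ρ hρ hp => h ρ hρ hp.1 hp.2⟩)
  have hcρ : c < ρ := G.prox_lt hρc
  obtain ⟨p, hp⟩ := ih ρ hcρ hρc hρn
  obtain ⟨q, hq⟩ := ih ρ hcρ hρd hρn
  refine ⟨p.reverse.append q, fun z hz => ?_⟩
  rw [Walk.mem_support_append_iff, Walk.support_reverse, List.mem_reverse] at hz
  rcases hz with hz | hz
  · rcases hp z hz with h | rfl
    exacts [Or.inl (hcρ.le.trans h), Or.inl le_rfl]
  · rcases hq z hz with h | rfl
    exacts [Or.inl (hcρ.le.trans h), Or.inr rfl]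

lemma stage_reachable_root (hx : x.1 < n) : (G.stage n).Reachable x G.root := by
  induction x using WellFoundedLT.induction with
  | _ x ih =>
  by_cases h0 : x.1 = 0
  · rw [show x = G.root from Fin.ext h0]
  obtain ⟨d, hd⟩ := G.prox_nonempty x (Nat.pos_of_ne_zero h0)
  obtain ⟨p, -⟩ := exists_walk_of_prox hd hx
  exact p.reachable.trans (ih d (G.prox_lt hd) (Nat.lt_trans (G.prox_lt hd) hx))

/-- Creating `s` subdivides the edge `a — b` of the tree `G.stage s`, and later vertices do not
change which of the older vertices `s` separates. -/
lemma not_reachable_stage_of_prox_of_prox (hacyc : (G.stage s.1).IsAcyclic) (hsn : s.1 < n)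
    (hn : n ≤ G.N) (ha : G.prox s a) (hb : G.prox s b) (hab : a ≠ b) :
    ¬ ((G.stage n).deleteIncidenceSet s).Reachable a b := by
  rw [reachable_stage_iff hsn hn (Nat.lt_succ_self _) (Nat.lt_succ_of_lt (G.prox_lt ha))
    (Nat.lt_succ_of_lt (G.prox_lt hb))]
  refine fun h => isBridge_iff.mp (isAcyclic_iff_forall_adj_isBridge.mp hacyc
    (stage_adj_of_prox_of_prox ha hb hab)) (h.mono fun p q hpq => ?_)
  obtain ⟨hpq, hps, hqs⟩ := deleteIncidenceSet_adj.mp hpq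
  obtain ⟨hpq, hnot⟩ := (stage_succ_adj_iff_of_ne hps hqs).mp hpq
  refine deleteEdges_adj.mpr ⟨hpq, fun he => hnot ?_⟩
  rcases Sym2.eq_iff.mp (Set.mem_singleton_iff.mp he) with ⟨rfl, rfl⟩ | ⟨rfl, rfl⟩
  exacts [⟨ha, hb⟩, ⟨hb, ha⟩]

lemma stage_isAcyclic (hn : n ≤ G.N) : (G.stage n).IsAcyclic := by
  induction n using Nat.strong_induction_on with
  | _ n ih =>
  have hprox : ∀ {r z}, (G.stage n).Adj r z → z < r → G.prox r z := fun h hz =>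
    (stage_adj.mp h).2.2.1.resolve_right fun h' => lt_asymm hz (G.prox_lt h')
  refine isAcyclic_of_forall_lt_adj fun r x y hrx hry hxr hyr hxy => ?_
  have hrn := (stage_adj.mp hrx).1
  exact not_reachable_stage_of_prox_of_prox (ih r.1 hrn (hrn.le.trans hn)) hrn hn (hprox hrx hxr)
    (hprox hry hyr) hxy

lemma graph_isTree : G.graph.IsTree := by
  rw [graph_eq_stage]
  exact ⟨(connected_iff_exists_forall_reachable _).mpr
    ⟨G.root, fun x => (stage_reachable_root x.2).symm⟩, stage_isAcyclic le_rfl⟩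

lemma eq_of_free_of_prox_of_prox (hν : G.Free ν) (ha : G.prox ν a) (hb : G.prox ν b) : a = b :=
  (Set.ncard_le_one (Set.toFinite _)).mp hν a ha b hb

lemma exists_prox_ne_of_not_free (hν : ¬ G.Free ν) (a : Fin G.N) : ∃ b, G.prox ν b ∧ b ≠ a := by
  by_contra! h
  exact hν ((Set.ncard_le_one (Set.toFinite _)).mpr fun b hb c hc => (h b hb).trans (h c hc).symm)

lemma infNear_le (h : G.InfNear μ γ) : γ ≤ μ := by
  induction h with
  | refl => exact le_rfl
  | tail _ hprox ih => exact (G.prox_lt hprox).le.trans ih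

lemma reachable_of_prox (hcd : G.prox c d) (hμc : μ < c) (hμd : μ ≠ d) :
    (G.graph.deleteIncidenceSet μ).Reachable c d := by
  obtain ⟨p, hp⟩ := exists_walk_of_prox hcd c.2
  rw [graph_eq_stage]
  exact p.reachable_deleteIncidenceSet fun hμ => (hp μ hμ).elim (not_le.mpr hμc) hμd

lemma not_reachable_of_prox_of_prox (ha : G.prox μ a) (hb : G.prox μ b) (hab : a ≠ b) :
    ¬ (G.graph.deleteIncidenceSet μ).Reachable a b := by
  rw [graph_eq_stage]
  exact not_reachable_stage_of_prox_of_prox (stage_isAcyclic μ.2.le) μ.2 le_rfl ha hb hab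

/-- When a free vertex `ν ≻ μ` is created it is a leaf attached to `μ`. -/
lemma not_reachable_of_free_of_prox (hν : G.Free ν) (hνμ : G.prox ν μ) (hx : x < ν) :
    ¬ (G.graph.deleteIncidenceSet μ).Reachable ν x := by
  rw [graph_eq_stage, reachable_stage_iff ν.2 le_rfl (Nat.lt_succ_of_lt (G.prox_lt hνμ))
    (Nat.lt_succ_self _) (Nat.lt_succ_of_lt hx)]
  refine fun h => hx.ne (h.eq_of_forall_not_adj fun y hy => ?_).symm
  obtain ⟨hνy, -, hyμ⟩ := deleteIncidenceSet_adj.mp hy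
  exact hyμ (eq_of_free_of_prox_of_prox hν (stage_succ_adj_left_iff.mp hνy) hνμ)

/-- When `μ` is created, `G.stage μ` is connected and loses at most the edge between the
vertices `μ` is proximate to. -/
lemma exists_prox_reachable_of_lt (hγ : γ < μ) :
    ∃ η, G.prox μ η ∧ (G.graph.deleteIncidenceSet μ).Reachable γ η := by
  suffices ∃ η, G.prox μ η ∧ ((G.stage (μ.1 + 1)).deleteIncidenceSet μ).Reachable γ η by
    obtain ⟨η, hη, h⟩ := this
    refine ⟨η, hη, ?_⟩
    rwa [graph_eq_stage, reachable_stage_iff μ.2 le_rfl (Nat.lt_succ_self _)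
      (Nat.lt_succ_of_lt hγ) (Nat.lt_succ_of_lt (G.prox_lt hη))]
  by_cases hγμ : G.prox μ γ
  · exact ⟨γ, hγμ, .refl γ⟩
  obtain ⟨a, ha⟩ := G.prox_nonempty μ (Nat.zero_lt_of_lt hγ)
  have hkeep : ∀ p q, (G.stage μ.1).Adj p q → ¬ (G.prox μ p ∧ G.prox μ q) →
      ((G.stage (μ.1 + 1)).deleteIncidenceSet μ).Adj p q := fun p q h hpq =>
    deleteIncidenceSet_adj.mpr ⟨(stage_succ_adj_iff_of_ne (ne_of_stage_adj h)
      (ne_of_stage_adj h.symm)).mpr ⟨h, hpq⟩, ne_of_stage_adj h, ne_of_stage_adj h.symm⟩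
  have hγa : (G.stage μ.1).Reachable γ a :=
    (stage_reachable_root hγ).trans (stage_reachable_root (G.prox_lt ha)).symm
  obtain ⟨w, z, hγw, hw, hz, hwz⟩ := hγa.exists_reachable_adj_mem (S := {z | G.prox μ z})
    (fun p q h hp _ => hkeep p q h fun hpq => hp hpq.1) hγμ ha
  exact ⟨z, hz, hγw.trans (hkeep w z hwz fun h => hw h.1).reachable⟩

lemma mem_branch_iff :
    η ∈ G.branch μ ν ↔ ν ≠ μ ∧ η ≠ μ ∧ (G.graph.deleteIncidenceSet μ).Reachable ν η := by
  simp only [branch, pathSet, Finset.mem_filter, Finset.mem_univ, true_and]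
  exact and_congr_right fun hν => and_congr_right fun _ =>
    (graph_isTree.dist_add_dist_eq_iff hν).not_left

lemma anterior_of_prox (h : G.prox μ η) : G.Anterior μ η :=
  ⟨η, mem_branch_iff.mpr ⟨(G.prox_lt h).ne, (G.prox_lt h).ne, .refl η⟩, .single h⟩

lemma not_anterior_of_free_of_prox (hf : G.Free η) (h : G.prox η μ) : ¬ G.Anterior μ η := by
  rintro ⟨γ, hγ, hinf⟩
  exact not_reachable_of_free_of_prox hf h ((infNear_le hinf).trans_lt (G.prox_lt h))
    (mem_branch_iff.mp hγ).2.2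

lemma existsUnique_prox_of_anterior (h : G.Anterior μ ν) :
    ∃! η, η ∈ G.branch μ ν ∧ G.prox μ η := by
  obtain ⟨γ, hγ, hinf⟩ := h
  obtain ⟨hνμ, hγμ, hνγ⟩ := mem_branch_iff.mp hγ
  obtain ⟨η, hη, hγη⟩ := exists_prox_reachable_of_lt ((infNear_le hinf).lt_of_ne hγμ)
  refine ⟨η, ⟨mem_branch_iff.mpr ⟨hνμ, (G.prox_lt hη).ne, hνγ.trans hγη⟩, hη⟩, ?_⟩
  rintro η' ⟨hη', hμη'⟩
  by_contra hne
  exact not_reachable_of_prox_of_prox hμη' hη hne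
    ((mem_branch_iff.mp hη').2.2.symm.trans (hνγ.trans hγη))

lemma exists_prox_mem_branch_of_not_anterior (hx : x ∈ G.branch μ ν)
    (hpost : ¬ G.Anterior μ ν) : ∃ w ∈ G.branch μ ν, G.prox w μ := by
  obtain ⟨hνμ, hxμ, hνx⟩ := mem_branch_iff.mp hx
  obtain ⟨w, z, hxw, hw, hz, hwz⟩ := (graph_isTree.connected x μ).exists_reachable_adj_mem
    (S := {μ}) (H' := G.graph.deleteIncidenceSet μ)
    (fun p q h hp hq => deleteIncidenceSet_adj.mpr ⟨h, hp, hq⟩) hxμ rfl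
  rw [Set.mem_singleton_iff.mp hz] at hwz
  have hwb : w ∈ G.branch μ ν := mem_branch_iff.mpr ⟨hνμ, hw, hνx.trans hxw⟩
  exact ⟨w, hwb, (adj_iff.mp hwz).1.resolve_right fun hμw => hpost ⟨w, hwb, .single hμw⟩⟩

lemma exists_lt_prox_mem_branch_of_not_free (hpost : ¬ G.Anterior μ ν)
    (hη : η ∈ G.branch μ ν) (hημ : G.prox η μ) (hf : ¬ G.Free η) :
    ∃ b ∈ G.branch μ ν, G.prox b μ ∧ b < η := by
  obtain ⟨b, hηb, hbμ⟩ := exists_prox_ne_of_not_free hf μ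
  obtain ⟨hνμ, -, hνη⟩ := mem_branch_iff.mp hη
  have hb : b ∈ G.branch μ ν := mem_branch_iff.mpr
    ⟨hνμ, hbμ, hνη.trans (reachable_of_prox hηb (G.prox_lt hημ) hbμ.symm)⟩
  refine ⟨b, hb, ?_, G.prox_lt hηb⟩
  exact (G.prox_pair hημ hηb hbμ.symm).1.resolve_left fun hμb => hpost ⟨b, hb, .single hμb⟩

lemma existsUnique_free_prox_of_not_anterior (hne : (G.branch μ ν).Nonempty)
    (hpost : ¬ G.Anterior μ ν) : ∃! η, η ∈ G.branch μ ν ∧ G.Free η ∧ G.prox η μ := by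
  obtain ⟨x, hx⟩ := hne
  obtain ⟨w, hw, hwμ⟩ := exists_prox_mem_branch_of_not_anterior hx hpost
  obtain ⟨η, hη, hmin⟩ := (Finset.univ.filter fun z => z ∈ G.branch μ ν ∧ G.prox z μ)
    |>.exists_min_image id ⟨w, by simp [hw, hwμ]⟩
  simp only [Finset.mem_filter, Finset.mem_univ, true_and, id] at hη hmin
  have hf : G.Free η := by
    by_contra hf
    obtain ⟨b, hb, hbμ, hbη⟩ := exists_lt_prox_mem_branch_of_not_free hpost hη.1 hη.2 hf
    exact (hmin b ⟨hb, hbμ⟩).not_gt hbη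
  refine ⟨η, ⟨hη.1, hf, hη.2⟩, ?_⟩
  rintro η' ⟨hη', hf', hη'μ⟩
  have hreach := (mem_branch_iff.mp hη').2.2.symm.trans (mem_branch_iff.mp hη.1).2.2
  rcases lt_trichotomy η' η with h | h | h
  · exact absurd hreach.symm (not_reachable_of_free_of_prox hf hη.2 h)
  · exact h
  · exact absurd hreach (not_reachable_of_free_of_prox hf' hη'μ h)

end DualGraph

/-- The nonempty posterior branches of `μ` correspond one to one to the free
vertices proximate to `μ`, whereas the anterior branches are in one to one
correspondence with the vertices to which `μ` is proximate. -/
theorem stmt0 (G : DualGraph) (μ : Fin G.N) :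
    (∀ ν, (G.branch μ ν).Nonempty → ¬ G.Anterior μ ν →
      ∃! η, η ∈ G.branch μ ν ∧ G.Free η ∧ G.prox η μ) ∧
    (∀ η, G.Free η → G.prox η μ → ¬ G.Anterior μ η) ∧
    (∀ ν, G.Anterior μ ν → ∃! η, η ∈ G.branch μ ν ∧ G.prox μ η) ∧
    (∀ η, G.prox μ η → G.Anterior μ η) :=
  ⟨fun _ => DualGraph.existsUnique_free_prox_of_not_anterior,
    fun _ => DualGraph.not_anterior_of_free_of_prox,
    fun _ => DualGraph.existsUnique_prox_of_anterior,
    fun _ => DualGraph.anterior_of_prox⟩
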